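/- arXiv:2206.13506 — 4 statements merged into one kernel-verified Lean document; each statement's English description precedes it below -/
import Mathlib

section
/- The scalar MLCP function is concave on [0, +∞). -/
open Real

theorem mlcp_concaveOn (lam γ ε : ℝ) (hlam : 0 < lam) (hγ : 0 < γ) (hε : 0 < ε)
    (f : ℝ → ℝ)
    (hf : ∀ z, f z =
      if z ≤ ε * Real.exp (γ * lam) - ε then
        lam * Real.log (z / ε + 1) - (Real.log (z / ε + 1))^2 / (2 * γ)
      else γ * lam^2 / 2) :
    ConcaveOn ℝ (Set.Ici 0) f := by
  set g : ℝ → ℝ := fun z => max (γ * lam - Real.log (z / ε + 1)) 0 with hg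
  -- concavity of log(z/ε + 1) on Ici 0
  have hL : ConcaveOn ℝ (Set.Ici 0) (fun z => Real.log (z / ε + 1)) := by
    have hlog : ConcaveOn ℝ (Set.Ioi (0:ℝ)) Real.log :=
      strictConcaveOn_log_Ioi.concaveOn
    constructor
    · exact convex_Ici 0
    · intro x hx y hy a b ha hb hab
      have hx1 : (x / ε + 1) ∈ Set.Ioi (0:ℝ) := by
        have : 0 ≤ x / ε := div_nonneg hx hε.le
        simp only [Set.mem_Ioi]; linarith
      have hy1 : (y / ε + 1) ∈ Set.Ioi (0:ℝ) := by
        have : 0 ≤ y / ε := div_nonneg hy hε.le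
        simp only [Set.mem_Ioi]; linarith
      have key := hlog.2 hx1 hy1 ha hb hab
      simp only [smul_eq_mul] at key ⊢
      have heq : (a * x + b * y) / ε + 1 = a * (x / ε + 1) + b * (y / ε + 1) := by
        linear_combination -hab
      rw [heq]
      exact key
  have hgconv : ConvexOn ℝ (Set.Ici 0) g := by
    have h1 : ConvexOn ℝ (Set.Ici 0) (fun z => γ * lam - Real.log (z / ε + 1)) := by
      have := hL.neg
      have h2 : ConvexOn ℝ (Set.Ici (0:ℝ)) (fun _ => γ * lam) :=
        convexOn_const _ (convex_Ici 0)
      simpa [sub_eq_add_neg, Pi.add_def, Pi.neg_def] using h2.add this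
    exact h1.sup (convexOn_const _ (convex_Ici 0))
  have hgnn : ∀ ⦃x⦄, x ∈ Set.Ici (0:ℝ) → 0 ≤ g x := fun x _ => le_max_right _ _
  have hsq : ConvexOn ℝ (Set.Ici 0) (fun z => g z ^ 2) := by
    have := hgconv.pow hgnn 2
    simpa [Pi.pow_apply, Pi.pow_def] using this
  have hsm : ConvexOn ℝ (Set.Ici 0) (fun z => g z ^ 2 / (2 * γ)) := by
    have h2γ : (0:ℝ) ≤ (2 * γ)⁻¹ := by positivity
    have := hsq.smul h2γ
    simpa [smul_eq_mul, div_eq_inv_mul, mul_comm] using this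
  have hf2 : ConcaveOn ℝ (Set.Ici 0) (fun z => γ * lam ^ 2 / 2 - g z ^ 2 / (2 * γ)) := by
    have := (concaveOn_const (γ * lam ^ 2 / 2) (convex_Ici (0:ℝ))).add hsm.neg
    simpa [sub_eq_add_neg, Pi.add_def, Pi.neg_def] using this
  refine hf2.congr fun z hz => ?_
  have hz0 : (0:ℝ) < z / ε + 1 := by
    have : 0 ≤ z / ε := div_nonneg hz hε.le
    linarith
  rw [hf z]
  by_cases hle : z ≤ ε * Real.exp (γ * lam) - ε
  · rw [if_pos hle]
    have hLle : Real.log (z / ε + 1) ≤ γ * lam := by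
      have h1 : z / ε + 1 ≤ Real.exp (γ * lam) := by
        rw [div_add' _ _ _ hε.ne', div_le_iff₀ hε]
        linarith [hle]
      calc Real.log (z / ε + 1) ≤ Real.log (Real.exp (γ * lam)) :=
            Real.log_le_log hz0 h1
        _ = γ * lam := Real.log_exp _
    have : g z = γ * lam - Real.log (z / ε + 1) := max_eq_left (by linarith)
    simp only [this]
    field_simp
    ring
  · rw [if_neg hle]
    have hLge : γ * lam ≤ Real.log (z / ε + 1) := by
      have h1 : Real.exp (γ * lam) ≤ z / ε + 1 := by
        rw [div_add' _ _ _ hε.ne', le_div_iff₀ hε]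
        nlinarith [not_le.mp hle]
      calc γ * lam = Real.log (Real.exp (γ * lam)) := (Real.log_exp _).symm
        _ ≤ Real.log (z / ε + 1) := Real.log_le_log (Real.exp_pos _) h1
    have : g z = 0 := max_eq_right (by linarith)
    simp only [this]
    ring
end

section
/- For each fixed z, the scalar MLCP function value f_{L,γ,λ}(z) is non-decreasing as a function of the parameter γ, and converges to λ·log(|z|/ε + 1) as γ → +∞. -/
open Real Filter

theorem mlcp_monotone_in_gamma_and_limit (lam ε z : ℝ) (hlam : 0 < lam) (hε : 0 < ε)
    (F : ℝ → ℝ)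
    (hF : ∀ γ, F γ =
      if |z| ≤ ε * Real.exp (γ * lam) - ε then
        lam * Real.log (|z| / ε + 1) - (Real.log (|z| / ε + 1))^2 / (2 * γ)
      else γ * lam^2 / 2) :
    (∀ γ₁ γ₂, 0 < γ₁ → γ₁ ≤ γ₂ → F γ₁ ≤ F γ₂) ∧
    Tendsto F atTop (nhds (lam * Real.log (|z| / ε + 1))) := by
  set A : ℝ := |z| / ε + 1 with hAdef
  have hA : 1 ≤ A := by
    have : 0 ≤ |z| / ε := div_nonneg (abs_nonneg z) hε.le
    simp [hAdef]; linarith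
  have hApos : 0 < A := lt_of_lt_of_le one_pos hA
  set L : ℝ := Real.log A with hLdef
  have hL : 0 ≤ L := Real.log_nonneg hA
  have hcond : ∀ γ : ℝ, (|z| ≤ ε * Real.exp (γ * lam) - ε) ↔ L ≤ γ * lam := by
    intro γ
    rw [hLdef, Real.log_le_iff_le_exp hApos]
    constructor
    · intro h
      have : |z| + ε ≤ ε * Real.exp (γ * lam) := by linarith
      rw [hAdef]
      rw [div_add' _ _ _ (ne_of_gt hε), div_le_iff₀ hε]
      linarith [this]
    · intro h
      rw [hAdef, div_add' _ _ _ (ne_of_gt hε), div_le_iff₀ hε] at h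
      nlinarith
  constructor
  · intro γ₁ γ₂ h1 h12
    have h2 : 0 < γ₂ := lt_of_lt_of_le h1 h12
    rw [hF γ₁, hF γ₂]
    by_cases c1 : |z| ≤ ε * Real.exp (γ₁ * lam) - ε
    · have hL1 : L ≤ γ₁ * lam := (hcond γ₁).1 c1
      have hL2 : L ≤ γ₂ * lam := hL1.trans (by nlinarith)
      rw [if_pos c1, if_pos ((hcond γ₂).2 hL2)]
      have : L ^ 2 / (2 * γ₂) ≤ L ^ 2 / (2 * γ₁) :=
        div_le_div_of_nonneg_left (by positivity) (by linarith) (by linarith)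
      linarith
    · have hL1 : γ₁ * lam < L := lt_of_not_ge (fun h => c1 ((hcond γ₁).2 h))
      rw [if_neg c1]
      by_cases c2 : |z| ≤ ε * Real.exp (γ₂ * lam) - ε
      · have hL2 : L ≤ γ₂ * lam := (hcond γ₂).1 c2
        rw [if_pos c2]
        have key : L ^ 2 / (2 * γ₂) ≤ lam * L / 2 := by
          rw [div_le_div_iff₀ (by positivity) two_pos]
          nlinarith [mul_le_mul_of_nonneg_right hL2 hL]
        nlinarith
      · rw [if_neg c2]
        nlinarith
  · have hev : ∀ᶠ γ in atTop, F γ = lam * L - L ^ 2 / (2 * γ) := by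
      filter_upwards [eventually_ge_atTop (L / lam)] with γ hγ
      have : L ≤ γ * lam := (div_le_iff₀ hlam).1 hγ
      rw [hF γ, if_pos ((hcond γ).2 this)]
    have h0 : Tendsto (fun γ : ℝ => L ^ 2 / (2 * γ)) atTop (nhds 0) := by
      apply Tendsto.div_atTop tendsto_const_nhds
      exact Tendsto.const_mul_atTop two_pos tendsto_id
    have := (tendsto_const_nhds (x := lam * L) (f := atTop)).sub h0
    rw [sub_zero] at this
    exact Tendsto.congr' (hev.mono fun _ h => h.symm) this
end

section
/- (Scalar EMLCP) For all z ∈ ℝ, the scalar MLCP function equals the infimum over ω ≥ 0 of ω·log(|z|/ε + 1) + (γ/2)·(ω − λ)², i.e., f_{L,γ,λ}(z) = min_{ω ≥ 0} { ω·log(|z|/ε+1) + (γ/2)(ω − λ)² }, and the minimum is attained at ω* = max(λ − log(|z|/ε+1)/γ, 0). -/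
open Real

theorem scalar_EMLCP (lam γ ε : ℝ) (hlam : 0 < lam) (hγ : 0 < γ) (hε : 0 < ε)
    (f : ℝ → ℝ)
    (hf : ∀ z, f z =
      if |z| ≤ ε * Real.exp (γ * lam) - ε then
        lam * Real.log (|z| / ε + 1) - (Real.log (|z| / ε + 1))^2 / (2 * γ)
      else γ * lam^2 / 2) :
    ∀ z : ℝ,
      (let a := Real.log (|z| / ε + 1)
       let ωstar := max (lam - a / γ) 0
       f z = ωstar * a + γ / 2 * (ωstar - lam)^2 ∧
         ∀ ω : ℝ, 0 ≤ ω → f z ≤ ω * a + γ / 2 * (ω - lam)^2) := by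
  intro z
  set a := Real.log (|z| / ε + 1) with ha
  have ht : (0:ℝ) < |z| / ε + 1 := by positivity
  have ha0 : 0 ≤ a := Real.log_nonneg (by
    have := abs_nonneg z
    have : 0 ≤ |z| / ε := by positivity
    linarith)
  have hcond : (|z| ≤ ε * Real.exp (γ * lam) - ε) ↔ a ≤ γ * lam := by
    rw [ha, Real.log_le_iff_le_exp ht]
    constructor
    · intro h
      have : |z| / ε ≤ Real.exp (γ * lam) - 1 := by
        rw [div_le_iff₀ hε]; ring_nf; linarith
      linarith
    · intro h
      have : |z| / ε ≤ Real.exp (γ * lam) - 1 := by linarith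
      have := (div_le_iff₀ hε).mp this
      nlinarith
  rw [hf, ← ha]
  clear_value a
  by_cases hc : |z| ≤ ε * Real.exp (γ * lam) - ε
  · have hag : a ≤ γ * lam := hcond.mp hc
    rw [if_pos hc]
    have hω : max (lam - a / γ) 0 = lam - a / γ := by
      apply max_eq_left
      have : a / γ ≤ lam := by rw [div_le_iff₀ hγ]; nlinarith
      linarith
    constructor
    · rw [hω]; field_simp; ring
    · intro ω hω0
      rw [hω] at *
      have key : ω * a + γ / 2 * (ω - lam)^2 - ((lam - a/γ) * a + γ / 2 * ((lam - a/γ) - lam)^2)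
          = γ / 2 * (ω - (lam - a/γ))^2 := by field_simp; ring
      have h2 : (lam - a/γ) * a + γ / 2 * ((lam - a/γ) - lam)^2 = lam * a - a^2 / (2*γ) := by
        field_simp; ring
      nlinarith [sq_nonneg (ω - (lam - a/γ))]
  · have hag : γ * lam < a := by
      by_contra h
      exact hc (hcond.mpr (le_of_not_gt h))
    rw [if_neg hc]
    have hω : max (lam - a / γ) 0 = 0 := by
      apply max_eq_right
      have : lam - a / γ ≤ 0 := by
        have : lam ≤ a / γ := by rw [le_div_iff₀ hγ]; nlinarith
        linarith
      linarith
    constructor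
    · rw [hω]; ring
    · intro ω hω0
      nlinarith [sq_nonneg ω, mul_nonneg hω0 (le_of_lt (by linarith : (0:ℝ) < a - γ*lam))]
end

section
/- The function z ↦ f_{L,γ,λ}(z) restricted to [0,∞) satisfies: for all x, y ≥ 0 and t ∈ [0,1], f(tx + (1−t)y) ≥ t·f(x) + (1−t)·f(y) (concavity), hence in particular f is subadditive on [0,∞): f(x + y) ≤ f(x) + f(y). -/
open Real

theorem mlcp_concave_pointwise_and_subadditive (lam γ ε : ℝ)
    (hlam : 0 < lam) (hγ : 0 < γ) (hε : 0 < ε)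
    (f : ℝ → ℝ)
    (hf : ∀ z, f z =
      if z ≤ ε * Real.exp (γ * lam) - ε then
        lam * Real.log (z / ε + 1) - (Real.log (z / ε + 1))^2 / (2 * γ)
      else γ * lam^2 / 2) :
    (∀ x y : ℝ, 0 ≤ x → 0 ≤ y → ∀ t : ℝ, 0 ≤ t → t ≤ 1 →
      t * f x + (1 - t) * f y ≤ f (t * x + (1 - t) * y)) ∧
    (∀ x y : ℝ, 0 ≤ x → 0 ≤ y → f (x + y) ≤ f x + f y) := by
  set c : ℝ := γ * lam with hc
  have hcpos : 0 < c := mul_pos hγ hlam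
  set φ : ℝ → ℝ := fun L => lam * L - L ^ 2 / (2 * γ) with hφ
  set g : ℝ → ℝ := fun z => min (Real.log (z / ε + 1)) c with hg
  -- f agrees with φ ∘ g
  have feq : ∀ z : ℝ, 0 ≤ z → f z = φ (g z) := by
    intro z hz0
    have hzpos : 0 < z / ε + 1 := by
      have : 0 ≤ z / ε := by positivity
      linarith
    rw [hf]
    by_cases hz : z ≤ ε * Real.exp c - ε
    · rw [if_pos hz]
      have hle : Real.log (z / ε + 1) ≤ c := by
        calc Real.log (z / ε + 1) ≤ Real.log (Real.exp c) := by
              apply Real.log_le_log hzpos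
              have : z / ε ≤ Real.exp c - 1 := by
                rw [div_le_iff₀ hε]; nlinarith
              linarith
          _ = c := Real.log_exp c
      simp [hg, hφ, min_eq_left hle]
    · rw [if_neg hz]
      push_neg at hz
      have hge : c ≤ Real.log (z / ε + 1) := by
        have h1 : Real.exp c ≤ z / ε + 1 := by
          have : Real.exp c - 1 ≤ z / ε := by
            rw [le_div_iff₀ hε]; nlinarith
          linarith
        calc c = Real.log (Real.exp c) := (Real.log_exp c).symm
          _ ≤ Real.log (z / ε + 1) := Real.log_le_log (Real.exp_pos c) h1
      simp only [hg, hφ, min_eq_right hge]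
      field_simp [hc]
      ring
  have hgle : ∀ z, g z ≤ c := fun z => min_le_right _ _
  -- φ is concave
  have hφcc : ∀ u v t : ℝ, 0 ≤ t → t ≤ 1 →
      t * φ u + (1 - t) * φ v ≤ φ (t * u + (1 - t) * v) := by
    intro u v t ht0 ht1
    rw [← sub_nonneg]
    have hkey : φ (t * u + (1 - t) * v) - (t * φ u + (1 - t) * φ v)
        = t * (1 - t) * (u - v) ^ 2 / (2 * γ) := by
      simp only [hφ]
      field_simp
      ring
    rw [hkey]
    have h1 : 0 ≤ t * (1 - t) * (u - v) ^ 2 := mul_nonneg (mul_nonneg ht0 (by linarith)) (sq_nonneg (u - v))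
    positivity
  -- φ is monotone on (-∞, c]
  have hφmono : ∀ u v : ℝ, u ≤ v → v ≤ c → φ u ≤ φ v := by
    intro u v huv hvc
    rw [← sub_nonneg]
    have hkey : φ v - φ u = (v - u) * (2 * c - u - v) / (2 * γ) := by
      simp only [hφ, hc]
      field_simp
      ring
    rw [hkey]
    have : 0 ≤ (v - u) * (2 * c - u - v) := by nlinarith
    positivity
  -- concavity of log(z/ε+1) on nonnegative reals
  have hlog : ∀ x y t : ℝ, 0 ≤ x → 0 ≤ y → 0 ≤ t → t ≤ 1 →
      t * Real.log (x / ε + 1) + (1 - t) * Real.log (y / ε + 1)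
        ≤ Real.log ((t * x + (1 - t) * y) / ε + 1) := by
    intro x y t hx hy ht0 ht1
    have hx' : x / ε + 1 ∈ Set.Ioi (0:ℝ) := by
      have : 0 ≤ x / ε := div_nonneg hx hε.le
      simp [Set.mem_Ioi]; linarith
    have hy' : y / ε + 1 ∈ Set.Ioi (0:ℝ) := by
      have : 0 ≤ y / ε := div_nonneg hy hε.le
      simp [Set.mem_Ioi]; linarith
    have := (strictConcaveOn_log_Ioi.concaveOn).2 hx' hy' ht0 (by linarith : (0:ℝ) ≤ 1 - t)
      (by ring)
    simp only [smul_eq_mul] at this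
    have harg : t * (x / ε + 1) + (1 - t) * (y / ε + 1)
        = (t * x + (1 - t) * y) / ε + 1 := by
      field_simp; ring
    rw [harg] at this
    exact this
  -- concavity of g on nonnegative reals
  have hgcc : ∀ x y t : ℝ, 0 ≤ x → 0 ≤ y → 0 ≤ t → t ≤ 1 →
      t * g x + (1 - t) * g y ≤ g (t * x + (1 - t) * y) := by
    intro x y t hx hy ht0 ht1
    refine le_min ?_ ?_
    · calc t * g x + (1 - t) * g y
          ≤ t * Real.log (x / ε + 1) + (1 - t) * Real.log (y / ε + 1) := by
            have h1 : g x ≤ Real.log (x / ε + 1) := min_le_left _ _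
            have h2 : g y ≤ Real.log (y / ε + 1) := min_le_left _ _
            have ht' : (0:ℝ) ≤ 1 - t := by linarith
            nlinarith
        _ ≤ Real.log ((t * x + (1 - t) * y) / ε + 1) := hlog x y t hx hy ht0 ht1
    · have h1 : g x ≤ c := hgle x
      have h2 : g y ≤ c := hgle y
      nlinarith
  -- main concavity claim
  have main : ∀ x y : ℝ, 0 ≤ x → 0 ≤ y → ∀ t : ℝ, 0 ≤ t → t ≤ 1 →
      t * f x + (1 - t) * f y ≤ f (t * x + (1 - t) * y) := by
    intro x y hx hy t ht0 ht1
    have hcomb : 0 ≤ t * x + (1 - t) * y := by nlinarith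
    rw [feq x hx, feq y hy, feq (t * x + (1 - t) * y) hcomb]
    calc t * φ (g x) + (1 - t) * φ (g y)
        ≤ φ (t * g x + (1 - t) * g y) := hφcc _ _ t ht0 ht1
      _ ≤ φ (g (t * x + (1 - t) * y)) := by
          apply hφmono
          · exact hgcc x y t hx hy ht0 ht1
          · exact hgle _
  refine ⟨main, ?_⟩
  -- subadditivity
  have hf0 : f 0 = 0 := by
    rw [hf]
    have h0 : (0:ℝ) ≤ ε * Real.exp c - ε := by
      have := Real.one_le_exp hcpos.le
      nlinarith
    rw [if_pos h0]
    simp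
  intro x y hx hy
  rcases eq_or_lt_of_le (by linarith : (0:ℝ) ≤ x + y) with hs | hs
  · have hx0 : x = 0 := by linarith
    have hy0 : y = 0 := by linarith
    simp [hx0, hy0, hf0]
  · set s : ℝ := x + y with hsdef
    set t : ℝ := x / s with htdef
    have ht0 : 0 ≤ t := div_nonneg hx hs.le
    have ht1 : t ≤ 1 := by
      rw [htdef, div_le_one hs]; linarith
    have h1 : t * f s + (1 - t) * f 0 ≤ f (t * s + (1 - t) * 0) :=
      main s 0 hs.le le_rfl t ht0 ht1
    have h2 : (1 - t) * f s + (1 - (1 - t)) * f 0 ≤ f ((1 - t) * s + (1 - (1 - t)) * 0) :=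
      main s 0 hs.le le_rfl (1 - t) (by linarith) (by linarith)
    have hts : t * s = x := by
      rw [htdef]; field_simp
    have hts' : (1 - t) * s = y := by
      have : (1 - t) * s = s - t * s := by ring
      rw [this, hts]; simp [hsdef]
    rw [hf0] at h1 h2
    simp only [mul_zero, add_zero] at h1 h2
    rw [hts] at h1
    rw [hts'] at h2
    calc f s = t * f s + (1 - t) * f s := by ring
      _ ≤ f x + f y := add_le_add h1 h2
end
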